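/- In the group β = ⟨u, v₁, v₂ | u² = v₁v₂, v₁^{b₁} = v₂^{b₂} = 1⟩ with gcd(b₁, b₂) = 1, the element v₁⁻¹u normally generates β. -/

import Mathlib

/-- Generators `u, v₁, v₂`. -/
inductive GenP : Type
  | u | v₁ | v₂
deriving DecidableEq

/-- Relators of the presentation `⟨u,v₁,v₂ | u² = v₁v₂, v₁^{b₁} = v₂^{b₂} = 1⟩` of the
orbifold fundamental group of `P²(b₁,b₂)`. -/
def relsP (b₁ b₂ : ℕ) : Set (FreeGroup GenP) :=
  { FreeGroup.of GenP.u ^ 2 * (FreeGroup.of GenP.v₁ * FreeGroup.of GenP.v₂)⁻¹,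
    FreeGroup.of GenP.v₁ ^ b₁, FreeGroup.of GenP.v₂ ^ b₂ }

/-!
Modulo `v₁⁻¹u` we have `u = v₁`, so the relation `u² = v₁v₂` becomes `v₂ = v₁`. The image of `v₁`
is then killed both by `b₁` and by `b₂`, hence by `gcd(b₁, b₂) = 1`: the quotient by the normal
closure of `v₁⁻¹u` is trivial.
-/

section OrbifoldRelations

variable {H : Type*} [Group H] {u v₁ v₂ : H} {b₁ b₂ : ℕ}

lemma eq_one_of_orbifold_relations (hu : u ^ 2 = v₁ * v₂) (h₁ : v₁ ^ b₁ = 1) (h₂ : v₂ ^ b₂ = 1)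
    (hb : b₁.Coprime b₂) (huv : u = v₁) : u = 1 ∧ v₁ = 1 ∧ v₂ = 1 := by
  have hv₂ : v₂ = v₁ := by
    rw [huv, pow_two] at hu
    exact (mul_left_cancel hu).symm
  have hv₁ : v₁ = 1 := (pow_eq_one_iff_of_coprime hb).mp ⟨h₁, hv₂ ▸ h₂⟩
  exact ⟨huv.trans hv₁, hv₁, hv₂.trans hv₁⟩

lemma mem_of_inv_mul_mem_of_orbifold_relations {N : Subgroup H} [N.Normal]
    (hu : u ^ 2 = v₁ * v₂) (h₁ : v₁ ^ b₁ = 1) (h₂ : v₂ ^ b₂ = 1) (hb : b₁.Coprime b₂)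
    (hN : v₁⁻¹ * u ∈ N) : u ∈ N ∧ v₁ ∈ N ∧ v₂ ∈ N := by
  have huv : (u : H ⧸ N) = v₁ := (QuotientGroup.eq.mpr hN).symm
  have himage := eq_one_of_orbifold_relations (b₁ := b₁) (b₂ := b₂)
    (by rw [← QuotientGroup.mk_pow, hu, QuotientGroup.mk_mul])
    (by rw [← QuotientGroup.mk_pow, h₁, QuotientGroup.mk_one])
    (by rw [← QuotientGroup.mk_pow, h₂, QuotientGroup.mk_one]) hb huv
  simpa only [QuotientGroup.eq_one_iff] using himage

end OrbifoldRelations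

section RelsP

variable (b₁ b₂ : ℕ)

lemma of_u_sq_relsP : (PresentedGroup.of GenP.u : PresentedGroup (relsP b₁ b₂)) ^ 2 =
    PresentedGroup.of GenP.v₁ * PresentedGroup.of GenP.v₂ :=
  PresentedGroup.mk_eq_mk_of_mul_inv_mem (Or.inl rfl)

lemma of_v₁_pow_relsP : (PresentedGroup.of GenP.v₁ : PresentedGroup (relsP b₁ b₂)) ^ b₁ = 1 :=
  PresentedGroup.one_of_mem (Or.inr (Or.inl rfl))

lemma of_v₂_pow_relsP : (PresentedGroup.of GenP.v₂ : PresentedGroup (relsP b₁ b₂)) ^ b₂ = 1 :=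
  PresentedGroup.one_of_mem (Or.inr (Or.inr rfl))

end RelsP

theorem projective_base_weight_one (b₁ b₂ : ℕ) (h : Nat.Coprime b₁ b₂) :
    Subgroup.normalClosure
      ({(PresentedGroup.of GenP.v₁)⁻¹ * PresentedGroup.of GenP.u} :
        Set (PresentedGroup (relsP b₁ b₂))) = ⊤ := by
  obtain ⟨hu, hv₁, hv₂⟩ := mem_of_inv_mul_mem_of_orbifold_relations
    (of_u_sq_relsP b₁ b₂) (of_v₁_pow_relsP b₁ b₂) (of_v₂_pow_relsP b₁ b₂) h
    (Subgroup.subset_normalClosure (Set.mem_singleton _))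
  rw [eq_top_iff, ← PresentedGroup.closure_range_of, Subgroup.closure_le]
  rintro _ ⟨x, rfl⟩
  cases x
  exacts [hu, hv₁, hv₂]
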